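/- arXiv:0704.3238 — 6 statements merged into one kernel-verified Lean document; each statement's English description precedes it below -/
import Mathlib

section
/- For every k ≥ 1 (with agents 0,…,k ∈ Agt), the alternative axiom schema for independence of agents (AAIA_k), namely ◇φ → ⟨k⟩⋀_{0 ≤ i < k}⟨i⟩φ, is valid in BT+AC structures: every instance is true at every index w/h of every BT+AC model. -/
/-! Common infrastructure for STIT logic (Chellas STIT, deliberative STIT,
historic necessity), following Balbiani, Herzig & Troquard,
"Alternative axiomatics and complexity of deliberative STIT theories". -/

namespace STIT

/-- Formulas of the (combined) STIT language, over a countable set of atoms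
(indexed by `ℕ`) and agents indexed by `ℕ` (the actual agent set `Agt` is an
initial segment of `ℕ`).  `cstit i` is the Chellas STIT operator `[i]`,
`dstit i` is the deliberative STIT operator `[i dstit: ·]`, and `box` is the
historic necessity operator `□`. -/
inductive Fml : Type
  | atm : ℕ → Fml
  | neg : Fml → Fml
  | and : Fml → Fml → Fml
  | cstit : ℕ → Fml → Fml
  | dstit : ℕ → Fml → Fml
  | box : Fml → Fml
  deriving DecidableEq

/-- Material implication `φ → ψ`, as the abbreviation `¬(φ ∧ ¬ψ)`. -/
def impF (φ ψ : Fml) : Fml := .neg (.and φ (.neg ψ))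

/-- Disjunction `φ ∨ ψ`, as the abbreviation `¬(¬φ ∧ ¬ψ)`. -/
def orF (φ ψ : Fml) : Fml := .neg (.and (.neg φ) (.neg ψ))

/-- Biimplication `φ ↔ ψ`, as the abbreviation `(φ → ψ) ∧ (ψ → φ)`. -/
def iffF (φ ψ : Fml) : Fml := .and (impF φ ψ) (impF ψ φ)

/-- `◇φ`, abbreviating `¬□¬φ`. -/
def diaF (φ : Fml) : Fml := .neg (.box (.neg φ))

/-- `⟨i⟩φ`, abbreviating `¬[i]¬φ`. -/
def posF (i : ℕ) (φ : Fml) : Fml := .neg (.cstit i (.neg φ))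

/-- Conjunction of a (finite) list of formulas; the empty conjunction is a
tautology `⊤`. -/
def conjF : List Fml → Fml
  | [] => impF (.atm 0) (.atm 0)
  | [φ] => φ
  | φ :: l => .and φ (conjF l)

/-- The length `‖φ‖` of a formula. -/
def len : Fml → ℕ
  | .atm _ => 1
  | .neg φ => 1 + len φ
  | .and φ ψ => 3 + len φ + len ψ
  | .cstit _ φ => 3 + len φ
  | .dstit _ φ => 5 + len φ
  | .box φ => 1 + len φ

/-- The set `sf φ` of subformulas of `φ`. -/
def sf : Fml → Finset Fml
  | .atm p => {.atm p}
  | .neg φ => insert (.neg φ) (sf φ)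
  | .and φ ψ => insert (.and φ ψ) (sf φ ∪ sf ψ)
  | .cstit i φ => insert (.cstit i φ) (sf φ)
  | .dstit i φ => insert (.dstit i φ) (sf φ)
  | .box φ => insert (.box φ) (sf φ)

/-- The set of atoms occurring in a formula. -/
def atoms : Fml → Finset ℕ
  | .atm p => {p}
  | .neg φ => atoms φ
  | .and φ ψ => atoms φ ∪ atoms ψ
  | .cstit _ φ => atoms φ
  | .dstit _ φ => atoms φ
  | .box φ => atoms φ

/-- `φ` contains no deliberative STIT operator (so `φ` belongs to `L_CSTIT`
when it moreover only uses box/cstit). -/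
def NoDstit : Fml → Prop
  | .atm _ => True
  | .neg φ => NoDstit φ
  | .and φ ψ => NoDstit φ ∧ NoDstit ψ
  | .cstit _ φ => NoDstit φ
  | .dstit _ _ => False
  | .box φ => NoDstit φ

/-- `φ` contains no Chellas STIT operator (so `φ` belongs to `L_DSTIT`). -/
def NoCstit : Fml → Prop
  | .atm _ => True
  | .neg φ => NoCstit φ
  | .and φ ψ => NoCstit φ ∧ NoCstit ψ
  | .cstit _ _ => False
  | .dstit _ φ => NoCstit φ
  | .box φ => NoCstit φ

/-- `φ` contains no historic necessity operator. -/
def NoBox : Fml → Prop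
  | .atm _ => True
  | .neg φ => NoBox φ
  | .and φ ψ => NoBox φ ∧ NoBox ψ
  | .cstit _ φ => NoBox φ
  | .dstit _ φ => NoBox φ
  | .box _ => False

/-- All agents occurring in `φ` belong to `A`. -/
def AgentsIn (A : Set ℕ) : Fml → Prop
  | .atm _ => True
  | .neg φ => AgentsIn A φ
  | .and φ ψ => AgentsIn A φ ∧ AgentsIn A ψ
  | .cstit i φ => i ∈ A ∧ AgentsIn A φ
  | .dstit i φ => i ∈ A ∧ AgentsIn A φ
  | .box φ => AgentsIn A φ

/-- `A` is an initial segment `{0, 1, …}` of `ℕ`. -/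
def InitSeg (A : Set ℕ) : Prop := ∀ i ∈ A, ∀ j : ℕ, j ≤ i → j ∈ A

/-- A BT+AC model over the agent set `Agt`: a nonempty tree-like strict
order of moments, together with a choice function and a valuation.
Histories are represented as maximal chains (maximal linearly `<`-ordered
subsets) of moments; `Choice i w` is, for each agent `i ∈ Agt`, a partition
of the set `H_w` of histories passing through `w` into nonempty cells,
satisfying the superadditivity constraint (independence of agents). -/
structure BTAC (Agt : Set ℕ) where
  W : Type
  neW : Nonempty W
  lt : W → W → Prop
  lt_irrefl : ∀ w : W, ¬ lt w w
  lt_trans : ∀ {a b c : W}, lt a b → lt b c → lt a c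
  treelike : ∀ w₁ w₂ w₃ : W, lt w₁ w₃ → lt w₂ w₃ → w₁ = w₂ ∨ lt w₁ w₂ ∨ lt w₂ w₁
  Choice : ℕ → W → Set (Set (Set W))
  V : ℕ → W → Set W → Prop
  choice_hist : ∀ i ∈ Agt, ∀ w : W, ∀ Q ∈ Choice i w, ∀ h ∈ Q,
      IsMaxChain lt h ∧ w ∈ h
  choice_cell_nonempty : ∀ i ∈ Agt, ∀ w : W, ∀ Q ∈ Choice i w, Q.Nonempty
  choice_nonempty : ∀ i ∈ Agt, ∀ w : W, (Choice i w).Nonempty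
  choice_cover : ∀ i ∈ Agt, ∀ w : W, ∀ h : Set W,
      IsMaxChain lt h → w ∈ h → ∃ Q ∈ Choice i w, h ∈ Q
  choice_disjoint : ∀ i ∈ Agt, ∀ w : W, ∀ Q ∈ Choice i w, ∀ Q' ∈ Choice i w,
      (Q ∩ Q').Nonempty → Q = Q'
  superadd : ∀ w : W, ∀ s : ℕ → Set (Set W),
      (∀ i ∈ Agt, s i ∈ Choice i w) → (⋂ i ∈ Agt, s i).Nonempty

/-- Truth of a formula at an index `w/h` of a BT+AC model.  (`[i]φ` holds at
`w/h` iff `φ` holds at `w/h'` for every history `h'` in the cell of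
`Choice i w` containing `h`; `□φ` holds at `w/h` iff `φ` holds at `w/h'` for
every history `h'` through `w`; `[i dstit: φ]` additionally requires a
witness history through `w` where `φ` fails.) -/
def truth {Agt : Set ℕ} (M : BTAC Agt) : Fml → M.W → Set M.W → Prop
  | .atm p, w, h => M.V p w h
  | .neg φ, w, h => ¬ truth M φ w h
  | .and φ ψ, w, h => truth M φ w h ∧ truth M ψ w h
  | .cstit i φ, w, h =>
      ∀ h' : Set M.W, (∃ Q ∈ M.Choice i w, h ∈ Q ∧ h' ∈ Q) → truth M φ w h'
  | .dstit i φ, w, h =>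
      (∀ h' : Set M.W, (∃ Q ∈ M.Choice i w, h ∈ Q ∧ h' ∈ Q) → truth M φ w h') ∧
      (∃ h'' : Set M.W, IsMaxChain M.lt h'' ∧ w ∈ h'' ∧ ¬ truth M φ w h'')
  | .box φ, w, h =>
      ∀ h' : Set M.W, IsMaxChain M.lt h' → w ∈ h' → truth M φ w h'

/-- Validity in BT+AC structures over the agent set `Agt`: truth at every
index `w/h` (with `h` a history and `w ∈ h`) of every BT+AC model. -/
def validBTAC (Agt : Set ℕ) (φ : Fml) : Prop :=
  ∀ M : BTAC Agt, ∀ w : M.W, ∀ h : Set M.W,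
    IsMaxChain M.lt h → w ∈ h → truth M φ w h

/-- Satisfiability in BT+AC structures over the agent set `Agt`. -/
def satBTAC (Agt : Set ℕ) (φ : Fml) : Prop :=
  ∃ M : BTAC Agt, ∃ w : M.W, ∃ h : Set M.W,
    IsMaxChain M.lt h ∧ w ∈ h ∧ truth M φ w h

/-- A Kripke model over the agent set `Agt`: a nonempty set of worlds, an
equivalence relation `R i` for each agent `i ∈ Agt`, and a valuation. -/
structure KModel (Agt : Set ℕ) where
  W : Type
  neW : Nonempty W
  R : ℕ → W → W → Prop
  equiv : ∀ i ∈ Agt, Equivalence (R i)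
  V : ℕ → Set W

/-- The general permutation property: for all worlds `w, v` and agents
`l, m, n ∈ Agt`, if `⟨w,v⟩ ∈ R_l ∘ R_m` then there is `u` with `⟨w,u⟩ ∈ R_n`
and `⟨u,v⟩ ∈ R_i` for every agent `i ≠ n`. -/
def GenPerm {Agt : Set ℕ} (M : KModel Agt) : Prop :=
  ∀ w v : M.W, ∀ l ∈ Agt, ∀ m ∈ Agt, ∀ n ∈ Agt,
    Relation.Comp (M.R l) (M.R m) w v →
    ∃ u : M.W, M.R n w u ∧ ∀ i ∈ Agt, i ≠ n → M.R i u v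

/-- Truth in a Kripke model: `[i]` is interpreted by `R i`, and `□` by the
composition `R 1 ∘ R 0` (so that `Def(□)` holds). -/
def ktruth {Agt : Set ℕ} (M : KModel Agt) : Fml → M.W → Prop
  | .atm p, w => w ∈ M.V p
  | .neg φ, w => ¬ ktruth M φ w
  | .and φ ψ, w => ktruth M φ w ∧ ktruth M ψ w
  | .cstit i φ, w => ∀ u : M.W, M.R i w u → ktruth M φ u
  | .dstit i φ, w =>
      (∀ u : M.W, M.R i w u → ktruth M φ u) ∧
      (∃ u : M.W, Relation.Comp (M.R 1) (M.R 0) w u ∧ ¬ ktruth M φ u)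
  | .box φ, w => ∀ u : M.W, Relation.Comp (M.R 1) (M.R 0) w u → ktruth M φ u

/-- Validity in all Kripke models over `Agt` (with equivalence relations)
satisfying the general permutation property. -/
def validK (Agt : Set ℕ) (φ : Fml) : Prop :=
  ∀ M : KModel Agt, GenPerm M → ∀ w : M.W, ktruth M φ w

/-- Satisfiability in some Kripke model over `Agt` (with equivalence
relations) satisfying the general permutation property. -/
def satK (Agt : Set ℕ) (φ : Fml) : Prop :=
  ∃ M : KModel Agt, GenPerm M ∧ ∃ w : M.W, ktruth M φ w

/-- `φ` is (a substitution instance of) a propositional tautology: it is true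
under every assignment of truth values to formulas that respects `¬` and `∧`. -/
def Taut (φ : Fml) : Prop :=
  ∀ v : Fml → Prop,
    (∀ ψ : Fml, v (.neg ψ) ↔ ¬ v ψ) →
    (∀ ψ χ : Fml, v (.and ψ χ) ↔ (v ψ ∧ v χ)) →
    v φ

/-- The S5 axiom schemas (K, T and 5) for a box-like operator `op`. -/
def s5Set (op : Fml → Fml) : Set Fml :=
  {χ | (∃ φ ψ : Fml, χ = impF (op (impF φ ψ)) (impF (op φ) (op ψ))) ∨
       (∃ φ : Fml, χ = impF (op φ) φ) ∨
       (∃ φ : Fml, χ = impF (.neg (op (.neg φ))) (op (.neg (op (.neg φ)))))}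

/-- The schemas `(Incl_i) : □φ → [i]φ` for each agent `i ∈ Agt`. -/
def inclSet (Agt : Set ℕ) : Set Fml :=
  {χ | ∃ i ∈ Agt, ∃ φ : Fml, χ = impF (.box φ) (.cstit i φ)}

/-- The formula `(AAIA_k) : ◇φ → ⟨k⟩⋀_{0 ≤ i < k}⟨i⟩φ`. -/
def aaiaFml (k : ℕ) (φ : Fml) : Fml :=
  impF (diaF φ) (posF k (conjF ((List.range k).map (fun i => posF i φ))))

/-- The alternative independence schemas `(AAIA_k)` for all `k ≥ 1` with
agents `0, …, k ∈ Agt`. -/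
def aaiaSet (Agt : Set ℕ) : Set Fml :=
  {χ | ∃ k : ℕ, 1 ≤ k ∧ (∀ i ≤ k, i ∈ Agt) ∧ ∃ φ : Fml, χ = aaiaFml k φ}

/-- The formula `(AIA_k) : (◇[0]φ₀ ∧ … ∧ ◇[k]φₖ) → ◇([0]φ₀ ∧ … ∧ [k]φₖ)`. -/
def aiaFml (k : ℕ) (φs : ℕ → Fml) : Fml :=
  impF (conjF ((List.range (k+1)).map (fun i => diaF (.cstit i (φs i)))))
       (diaF (conjF ((List.range (k+1)).map (fun i => .cstit i (φs i)))))

/-- The formula `(GPerm_k) : ⟨l⟩⟨m⟩φ → ⟨n⟩⋀_{i ≤ k, i ≠ n}⟨i⟩φ`. -/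
def gpermFml (k l m n : ℕ) (φ : Fml) : Fml :=
  impF (posF l (posF m φ))
       (posF n (conjF (((List.range (k+1)).filter (fun i => i != n)).map
          (fun i => posF i φ))))

/-- The general permutation schemas `(GPerm_k)` for all `k ≥ 0` (with agents
`0, …, k ∈ Agt`) and agents `l, m, n ∈ Agt`. -/
def gpermSet (Agt : Set ℕ) : Set Fml :=
  {χ | ∃ k : ℕ, (∀ i ≤ k, i ∈ Agt) ∧
       ∃ l ∈ Agt, ∃ m ∈ Agt, ∃ n ∈ Agt, ∃ φ : Fml, χ = gpermFml k l m n φ}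

/-- The definition schema `Def(□) : □φ ↔ [1][0]φ`. -/
def defBoxSet : Set Fml :=
  {χ | ∃ φ : Fml, χ = iffF (.box φ) (.cstit 1 (.cstit 0 φ))}

/-- The alternative axiomatics of Section 3: `S5(□)`, `S5(i)` for each agent
`i ∈ Agt`, `(Incl_i)` and `(AAIA_k)`. -/
def xuAltAx (Agt : Set ℕ) : Set Fml :=
  s5Set Fml.box ∪ (⋃ i ∈ Agt, s5Set (fun φ => Fml.cstit i φ)) ∪
    inclSet Agt ∪ aaiaSet Agt

/-- The axiomatics of Section 4: `S5(i)` for each agent `i ∈ Agt`, `Def(□)`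
and `(GPerm_k)`. -/
def gpermAx (Agt : Set ℕ) : Set Fml :=
  (⋃ i ∈ Agt, s5Set (fun φ => Fml.cstit i φ)) ∪ defBoxSet ∪ gpermSet Agt

/-- Hilbert-style provability from the axiom set `Ax` (together with all
propositional tautologies) by modus ponens and `□`-necessitation. -/
inductive ProvB (Ax : Set Fml) : Fml → Prop
  | taut {φ : Fml} : Taut φ → ProvB Ax φ
  | axm {φ : Fml} : φ ∈ Ax → ProvB Ax φ
  | mp {φ ψ : Fml} : ProvB Ax (impF φ ψ) → ProvB Ax φ → ProvB Ax ψ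
  | nec {φ : Fml} : ProvB Ax φ → ProvB Ax (.box φ)

/-- Hilbert-style provability from the axiom set `Ax` (together with all
propositional tautologies) by modus ponens and `[i]`-necessitation for each
agent `i ∈ Agt`. -/
inductive ProvC (Agt : Set ℕ) (Ax : Set Fml) : Fml → Prop
  | taut {φ : Fml} : Taut φ → ProvC Agt Ax φ
  | axm {φ : Fml} : φ ∈ Ax → ProvC Agt Ax φ
  | mp {φ ψ : Fml} : ProvC Agt Ax (impF φ ψ) → ProvC Agt Ax φ → ProvC Agt Ax ψ
  | nec {i : ℕ} {φ : Fml} : i ∈ Agt → ProvC Agt Ax φ → ProvC Agt Ax (.cstit i φ)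

/-- The biimplication `B_ψ` relating the fresh atom `p_ψ` (given by `pA ψ`)
with `ψ`, used in the translation `tr` from `L_DSTIT` to `L_CSTIT`:
`B_{[i dstit: φ]} = (p_{[i dstit: φ]} ↔ [i]p_φ ∧ ¬□p_φ)`. -/
def Beq (pA : Fml → ℕ) : Fml → Fml
  | .atm q => iffF (.atm (pA (.atm q))) (.atm q)
  | .neg φ => iffF (.atm (pA (.neg φ))) (.neg (.atm (pA φ)))
  | .and φ ψ => iffF (.atm (pA (.and φ ψ))) (.and (.atm (pA φ)) (.atm (pA ψ)))
  | .cstit i φ => iffF (.atm (pA (.cstit i φ))) (.cstit i (.atm (pA φ)))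
  | .dstit i φ => iffF (.atm (pA (.dstit i φ)))
      (.and (.cstit i (.atm (pA φ))) (.neg (.box (.atm (pA φ)))))
  | .box φ => iffF (.atm (pA (.box φ))) (.box (.atm (pA φ)))

/-- The biimplication `B'_ψ` used in the translation `tr'` from `L_CSTIT` to
`L_DSTIT`: `B'_{[i]φ} = (p_{[i]φ} ↔ [i dstit: p_φ] ∨ □p_φ)`. -/
def Beq' (pA : Fml → ℕ) : Fml → Fml
  | .atm q => iffF (.atm (pA (.atm q))) (.atm q)
  | .neg φ => iffF (.atm (pA (.neg φ))) (.neg (.atm (pA φ)))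
  | .and φ ψ => iffF (.atm (pA (.and φ ψ))) (.and (.atm (pA φ)) (.atm (pA ψ)))
  | .cstit i φ => iffF (.atm (pA (.cstit i φ)))
      (orF (.dstit i (.atm (pA φ))) (.box (.atm (pA φ))))
  | .dstit i φ => iffF (.atm (pA (.dstit i φ))) (.dstit i (.atm (pA φ)))
  | .box φ => iffF (.atm (pA (.box φ))) (.box (.atm (pA φ)))

/-- The translation `tr(φ₀) = p_{φ₀} ∧ ⋀_{ψ ∈ sf(φ₀)} □B_ψ`. -/
noncomputable def tr (pA : Fml → ℕ) (φ0 : Fml) : Fml :=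
  .and (.atm (pA φ0)) (conjF ((sf φ0).toList.map (fun ψ => .box (Beq pA ψ))))

/-- The translation `tr'(φ₀) = p_{φ₀} ∧ ⋀_{ψ ∈ sf(φ₀)} □B'_ψ`. -/
noncomputable def tr' (pA : Fml → ℕ) (φ0 : Fml) : Fml :=
  .and (.atm (pA φ0)) (conjF ((sf φ0).toList.map (fun ψ => .box (Beq' pA ψ))))

/-- The atoms `p_ψ = pA ψ` for `ψ ∈ sf φ₀` are pairwise distinct and fresh
(none occurs in `φ₀`). -/
def Fresh (pA : Fml → ℕ) (φ0 : Fml) : Prop :=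
  Set.InjOn pA ↑(sf φ0) ∧ ∀ ψ ∈ sf φ0, pA ψ ∉ atoms φ0


/-! Given `◇φ`, pick a history `h₀` through `w` where `φ` holds. Independence of agents
(superadditivity) yields a history `h'` lying in the current choice cell of agent `k` and,
for every other agent `i`, in the cell of `i` containing `h₀`. Then `h'` witnesses `⟨k⟩`,
and at `h'` each `⟨i⟩φ` with `i < k` is witnessed by `h₀`. -/

namespace BTAC

variable {Agt : Set ℕ} (M : BTAC Agt)

def SameChoice (i : ℕ) (w : M.W) (h h' : Set M.W) : Prop :=
  ∃ Q ∈ M.Choice i w, h ∈ Q ∧ h' ∈ Q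

theorem exists_choice_selection {w : M.W} {h : Set M.W} (hh : IsMaxChain M.lt h)
    (hwh : w ∈ h) :
    ∃ s : ℕ → Set (Set M.W), ∀ i ∈ Agt, s i ∈ M.Choice i w ∧ h ∈ s i := by
  have hcell : ∀ i, ∃ Q : Set (Set M.W), i ∈ Agt → Q ∈ M.Choice i w ∧ h ∈ Q := by
    intro i
    by_cases hi : i ∈ Agt
    · obtain ⟨Q, hQ, hhQ⟩ := M.choice_cover i hi w h hh hwh
      exact ⟨Q, fun _ => ⟨hQ, hhQ⟩⟩
    · exact ⟨∅, fun hi' => absurd hi' hi⟩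
  choose s hs using hcell
  exact ⟨s, hs⟩

theorem exists_sameChoice_and_sameChoice_of_ne {w : M.W} {k : ℕ} (hk : k ∈ Agt)
    {h h₀ : Set M.W} (hh : IsMaxChain M.lt h) (hwh : w ∈ h)
    (hh₀ : IsMaxChain M.lt h₀) (hwh₀ : w ∈ h₀) :
    ∃ h', M.SameChoice k w h h' ∧ ∀ i ∈ Agt, i ≠ k → M.SameChoice i w h' h₀ := by
  obtain ⟨Qk, hQk, hhQk⟩ := M.choice_cover k hk w h hh hwh
  obtain ⟨s, hs⟩ := M.exists_choice_selection hh₀ hwh₀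
  have hsel : ∀ i ∈ Agt, Function.update s k Qk i ∈ M.Choice i w := by
    intro i hi
    rcases eq_or_ne i k with rfl | hik
    · simpa using hQk
    · simpa [hik] using (hs i hi).1
  obtain ⟨h', hh'⟩ := M.superadd w _ hsel
  simp only [Set.mem_iInter] at hh'
  refine ⟨h', ⟨Qk, hQk, hhQk, by simpa using hh' k hk⟩, fun i hi hik => ?_⟩
  exact ⟨s i, (hs i hi).1, by simpa [hik] using hh' i hi, (hs i hi).2⟩

end BTAC

section Truth

variable {Agt : Set ℕ} (M : BTAC Agt) (w : M.W) (h : Set M.W)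

theorem truth_impF (φ ψ : Fml) :
    truth M (impF φ ψ) w h ↔ (truth M φ w h → truth M ψ w h) := by
  simp only [impF, truth]
  tauto

theorem truth_diaF (φ : Fml) :
    truth M (diaF φ) w h ↔ ∃ h', IsMaxChain M.lt h' ∧ w ∈ h' ∧ truth M φ w h' := by
  simp only [diaF, truth, not_forall, not_not, exists_prop]

theorem truth_posF (i : ℕ) (φ : Fml) :
    truth M (posF i φ) w h ↔ ∃ h', M.SameChoice i w h h' ∧ truth M φ w h' := by
  simp only [posF, truth, BTAC.SameChoice, not_forall, not_not, exists_prop]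

theorem truth_conjF (l : List Fml) : truth M (conjF l) w h ↔ ∀ ψ ∈ l, truth M ψ w h := by
  induction l with
  | nil => simp [conjF, truth_impF]
  | cons ψ l ih =>
    cases l with
    | nil => simp [conjF]
    | cons χ l => simp only [conjF, truth] at ih ⊢; simp [ih]

end Truth

theorem aaia_valid_general (Agt : Set ℕ)
    (k : ℕ) (hkAgt : ∀ i ≤ k, i ∈ Agt)
    (φ : Fml) :
    validBTAC Agt (aaiaFml k φ) := by
  intro M w h hh hwh
  rw [aaiaFml, truth_impF, truth_diaF, truth_posF]
  rintro ⟨h₀, hh₀, hwh₀, hφ₀⟩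
  obtain ⟨h', hkh', hih'⟩ :=
    M.exists_sameChoice_and_sameChoice_of_ne (hkAgt k le_rfl) hh hwh hh₀ hwh₀
  refine ⟨h', hkh', (truth_conjF M w h' _).2 ?_⟩
  simp only [List.mem_map, List.mem_range]
  rintro _ ⟨i, hi, rfl⟩
  exact (truth_posF M w h' i φ).2 ⟨h₀, hih' i (hkAgt i hi.le) hi.ne, hφ₀⟩

/-- For every `k ≥ 1` (with agents `0, …, k ∈ Agt`), the
alternative axiom schema for independence of agents `(AAIA_k)`, namely
`◇φ → ⟨k⟩⋀_{0 ≤ i < k}⟨i⟩φ`, is valid in BT+AC structures. -/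
theorem aaia_valid (Agt : Set ℕ) (hAgt : InitSeg Agt)
    (k : ℕ) (hk : 1 ≤ k) (hkAgt : ∀ i ≤ k, i ∈ Agt)
    (φ : Fml) (hφ : NoDstit φ) (hφA : AgentsIn Agt φ) :
    validBTAC Agt (aaiaFml k φ) :=
  aaia_valid_general Agt k hkAgt φ

end STIT
end

section
/- In the Hilbert system whose axioms are all propositional tautologies, the S5 axiom schemas S5(i) for each operator [i], the definition schema Def(□): □φ ↔ [1][0]φ, and the general permutation schemas (GPerm_k): ⟨l⟩⟨m⟩φ → ⟨n⟩⋀_{i ≤ k, i ≠ n}⟨i⟩φ for all k and all agents l,m,n, with rules modus ponens and [i]-necessitation for each agent i: (1) every instance of the S5 axiom schemas for □ is provable; (2) every instance of (Incl_i): □φ → [i]φ is provable; (3) every instance of (AAIA_k): ◇φ → ⟨k⟩⋀_{0 ≤ i < k}⟨i⟩φ is provable; and (4) the rule of □-necessitation is derivable (if φ is provable then □φ is provable). -/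
/-! Common infrastructure for STIT logic (Chellas STIT, deliberative STIT,
historic necessity), following Balbiani, Herzig & Troquard,
"Alternative axiomatics and complexity of deliberative STIT theories". -/

namespace STIT

/-! Since `□` is the composite `[1][0]`, the schemas K and T and the necessitation rule for `□`
follow from those of `[1]` and `[0]`. Everything else comes from one consequence of `(GPerm_j)`,
`⟨l⟩⟨m⟩ψ → ⟨n⟩⟨j⟩ψ` for `j ≠ n`: with `l = m = i`, `n = 1`, `j = 0` it gives `⟨i⟩ψ → ◇ψ`, the
dual of `(Incl_i)`; with `l = 0`, `m = n = 1`, `j = 0` it moves `⟨0⟩` past `⟨1⟩`, so that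
`◇φ = ⟨1⟩⟨0⟩φ` is absorbed by `⟨0⟩` and by `⟨1⟩`, which is axiom 5 for `□`. Finally `(AAIA_k)` is
`(GPerm_k)` with `l = 1`, `m = 0`, `n = k`. -/

theorem val_conjF {v : Fml → Prop} (hn : ∀ ψ : Fml, v (.neg ψ) ↔ ¬ v ψ)
    (ha : ∀ ψ χ : Fml, v (.and ψ χ) ↔ (v ψ ∧ v χ)) :
    ∀ L : List Fml, v (conjF L) ↔ ∀ x ∈ L, v x
  | [] => by simp [conjF, impF, hn, ha]
  | [x] => by simp [conjF]
  | x :: y :: L => (ha _ _).trans <| by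
    rw [val_conjF hn ha (y :: L), List.forall_mem_cons (l := y :: L)]

theorem taut_impF_conjF {x : Fml} {L : List Fml} (hx : x ∈ L) :
    Taut (impF (conjF L) x) := by
  intro v hn ha
  rw [impF, hn, ha, hn, val_conjF hn ha]
  exact fun ⟨hL, hnx⟩ => hnx (hL x hx)

theorem range_succ_filter_ne (k : ℕ) :
    (List.range (k + 1)).filter (fun i => i != k) = List.range k := by
  rw [List.range_succ, List.filter_append, List.filter_singleton, bne_self_eq_false,
    cond_false, List.append_nil, List.filter_eq_self]
  intro i hi
  simpa using (List.mem_range.mp hi).ne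

namespace ProvC

variable {Agt : Set ℕ} {Ax : Set Fml} {a b c a' b' c' : Fml}

theorem imp_trans (hab : ProvC Agt Ax (impF a b)) (hbc : ProvC Agt Ax (impF b c)) :
    ProvC Agt Ax (impF a c) :=
  mp (mp (taut (by intro v hn ha; simp only [impF, hn, ha]; tauto)) hab) hbc

theorem contra (h : ProvC Agt Ax (impF a b)) : ProvC Agt Ax (impF (.neg b) (.neg a)) :=
  mp (taut (by intro v hn ha; simp only [impF, hn, ha]; tauto)) h

theorem iff_mp (h : ProvC Agt Ax (iffF a b)) : ProvC Agt Ax (impF a b) :=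
  mp (taut (by intro v hn ha; simp only [iffF, impF, hn, ha]; tauto)) h

theorem iff_mpr (h : ProvC Agt Ax (iffF a b)) : ProvC Agt Ax (impF b a) :=
  mp (taut (by intro v hn ha; simp only [iffF, impF, hn, ha]; tauto)) h

theorem imp_not_not (a : Fml) : ProvC Agt Ax (impF a (.neg (.neg a))) :=
  taut (by intro v hn ha; simp only [impF, hn, ha]; tauto)

theorem not_not_imp (a : Fml) : ProvC Agt Ax (impF (.neg (.neg a)) a) :=
  taut (by intro v hn ha; simp only [impF, hn, ha]; tauto)

theorem imp_imp_congr (h : ProvC Agt Ax (impF a' (impF b' c')))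
    (ha : ProvC Agt Ax (iffF a a')) (hb : ProvC Agt Ax (iffF b b'))
    (hc : ProvC Agt Ax (iffF c c')) : ProvC Agt Ax (impF a (impF b c)) := by
  refine mp (mp (mp (mp (taut ?_) h) ha) hb) hc
  intro v hn ha; simp only [iffF, impF, hn, ha]; tauto

end ProvC

def HasS5 (Agt : Set ℕ) (Ax : Set Fml) : Prop :=
  ∀ i ∈ Agt, s5Set (fun φ => Fml.cstit i φ) ⊆ Ax

namespace ProvC

variable {Agt : Set ℕ} {Ax : Set Fml} {i : ℕ} {a b : Fml}

theorem cstit_K (hAx : HasS5 Agt Ax) (hi : i ∈ Agt) (a b : Fml) :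
    ProvC Agt Ax (impF (.cstit i (impF a b)) (impF (.cstit i a) (.cstit i b))) :=
  axm (hAx i hi (Or.inl ⟨a, b, rfl⟩))

theorem cstit_T (hAx : HasS5 Agt Ax) (hi : i ∈ Agt) (a : Fml) :
    ProvC Agt Ax (impF (.cstit i a) a) :=
  axm (hAx i hi (Or.inr (Or.inl ⟨a, rfl⟩)))

theorem cstit_five (hAx : HasS5 Agt Ax) (hi : i ∈ Agt) (a : Fml) :
    ProvC Agt Ax (impF (posF i a) (.cstit i (posF i a))) :=
  axm (hAx i hi (Or.inr (Or.inr ⟨a, rfl⟩)))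

theorem cstit_mono (hAx : HasS5 Agt Ax) (hi : i ∈ Agt) (h : ProvC Agt Ax (impF a b)) :
    ProvC Agt Ax (impF (.cstit i a) (.cstit i b)) :=
  mp (cstit_K hAx hi a b) (nec hi h)

theorem posF_mono (hAx : HasS5 Agt Ax) (hi : i ∈ Agt) (h : ProvC Agt Ax (impF a b)) :
    ProvC Agt Ax (impF (posF i a) (posF i b)) :=
  contra (cstit_mono hAx hi (contra h))

theorem imp_posF (hAx : HasS5 Agt Ax) (hi : i ∈ Agt) (a : Fml) :
    ProvC Agt Ax (impF a (posF i a)) :=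
  imp_trans (imp_not_not a) (contra (cstit_T hAx hi (.neg a)))

theorem cstit_imp_not_posF_not (hAx : HasS5 Agt Ax) (hi : i ∈ Agt) (a : Fml) :
    ProvC Agt Ax (impF (.cstit i a) (.neg (posF i (.neg a)))) :=
  imp_trans (cstit_mono hAx hi (imp_not_not a)) (imp_not_not _)

theorem not_posF_not_imp_cstit (hAx : HasS5 Agt Ax) (hi : i ∈ Agt) (a : Fml) :
    ProvC Agt Ax (impF (.neg (posF i (.neg a))) (.cstit i a)) :=
  imp_trans (not_not_imp _) (cstit_mono hAx hi (not_not_imp a))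

theorem posF_cstit_imp_cstit (hAx : HasS5 Agt Ax) (hi : i ∈ Agt) (a : Fml) :
    ProvC Agt Ax (impF (posF i (.cstit i a)) (.cstit i a)) := by
  have h : ProvC Agt Ax (impF (.cstit i (posF i (.neg a))) (.cstit i (.neg (.cstit i a)))) :=
    cstit_mono hAx hi (contra (cstit_mono hAx hi (imp_not_not a)))
  exact imp_trans (contra (imp_trans (cstit_five hAx hi (.neg a)) h))
    (not_posF_not_imp_cstit hAx hi a)

theorem cstit_imp_cstit_cstit (hAx : HasS5 Agt Ax) (hi : i ∈ Agt) (a : Fml) :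
    ProvC Agt Ax (impF (.cstit i a) (.cstit i (.cstit i a))) :=
  imp_trans (imp_trans (imp_posF hAx hi _) (cstit_five hAx hi _))
    (cstit_mono hAx hi (posF_cstit_imp_cstit hAx hi a))

theorem posF_posF_imp_posF (hAx : HasS5 Agt Ax) (hi : i ∈ Agt) (a : Fml) :
    ProvC Agt Ax (impF (posF i (posF i a)) (posF i a)) :=
  contra (imp_trans (cstit_imp_cstit_cstit hAx hi _) (cstit_mono hAx hi (imp_not_not _)))

theorem imp_cstit_of_posF_imp (hAx : HasS5 Agt Ax) (hi : i ∈ Agt)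
    (h : ProvC Agt Ax (impF (posF i a) a)) : ProvC Agt Ax (impF a (.cstit i a)) :=
  imp_trans (imp_trans (imp_posF hAx hi a) (cstit_five hAx hi a)) (cstit_mono hAx hi h)

end ProvC

theorem hasS5_gpermAx (Agt : Set ℕ) : HasS5 Agt (gpermAx Agt) :=
  fun _ hi _ h => Set.mem_union_left _ (Set.mem_union_left _ (Set.mem_biUnion hi h))

namespace ProvC

variable {Agt : Set ℕ} {i : ℕ}

theorem gpermAx_box_iff (φ : Fml) :
    ProvC Agt (gpermAx Agt) (iffF (.box φ) (.cstit 1 (.cstit 0 φ))) :=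
  axm (Set.mem_union_left _ (Set.mem_union_right _ ⟨φ, rfl⟩))

theorem gpermAx_gpermFml {k l m n : ℕ} (hk : ∀ i ≤ k, i ∈ Agt) (hl : l ∈ Agt)
    (hm : m ∈ Agt) (hn : n ∈ Agt) (φ : Fml) : ProvC Agt (gpermAx Agt) (gpermFml k l m n φ) :=
  axm (Set.mem_union_right _ ⟨k, hk, l, hl, m, hm, n, hn, φ, rfl⟩)

theorem posF_posF_imp_posF_posF (hAgt : InitSeg Agt) {l m n j : ℕ} (hl : l ∈ Agt)
    (hm : m ∈ Agt) (hn : n ∈ Agt) (hj : j ∈ Agt) (hjn : j ≠ n) (ψ : Fml) :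
    ProvC Agt (gpermAx Agt) (impF (posF l (posF m ψ)) (posF n (posF j ψ))) := by
  have hmem : posF j ψ ∈ ((List.range (j + 1)).filter (fun i => i != n)).map
      (fun i => posF i ψ) :=
    List.mem_map_of_mem (List.mem_filter.mpr ⟨List.mem_range.mpr j.lt_succ_self, by simpa⟩)
  exact imp_trans (gpermAx_gpermFml (hAgt j hj) hl hm hn ψ)
    (posF_mono (hasS5_gpermAx Agt) hn (taut (taut_impF_conjF hmem)))

theorem diaF_imp_posF_posF (h1 : 1 ∈ Agt) (φ : Fml) :
    ProvC Agt (gpermAx Agt) (impF (diaF φ) (posF 1 (posF 0 φ))) :=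
  imp_trans (contra (iff_mpr (gpermAx_box_iff (.neg φ))))
    (contra (cstit_mono (hasS5_gpermAx Agt) h1 (not_not_imp _)))

theorem posF_posF_imp_diaF (h1 : 1 ∈ Agt) (φ : Fml) :
    ProvC Agt (gpermAx Agt) (impF (posF 1 (posF 0 φ)) (diaF φ)) :=
  imp_trans (contra (cstit_mono (hasS5_gpermAx Agt) h1 (imp_not_not _)))
    (contra (iff_mp (gpermAx_box_iff (.neg φ))))

theorem box_K (h0 : 0 ∈ Agt) (h1 : 1 ∈ Agt) (φ ψ : Fml) :
    ProvC Agt (gpermAx Agt) (impF (.box (impF φ ψ)) (impF (.box φ) (.box ψ))) :=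
  imp_imp_congr
    (imp_trans (cstit_mono (hasS5_gpermAx Agt) h1 (cstit_K (hasS5_gpermAx Agt) h0 φ ψ))
      (cstit_K (hasS5_gpermAx Agt) h1 _ _))
    (gpermAx_box_iff _) (gpermAx_box_iff _) (gpermAx_box_iff _)

theorem box_T (h0 : 0 ∈ Agt) (h1 : 1 ∈ Agt) (φ : Fml) :
    ProvC Agt (gpermAx Agt) (impF (.box φ) φ) :=
  imp_trans (iff_mp (gpermAx_box_iff φ))
    (imp_trans (cstit_T (hasS5_gpermAx Agt) h1 _) (cstit_T (hasS5_gpermAx Agt) h0 φ))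

theorem box_five (hAgt : InitSeg Agt) (h1 : 1 ∈ Agt) (φ : Fml) :
    ProvC Agt (gpermAx Agt) (impF (diaF φ) (.box (diaF φ))) := by
  have h0 : 0 ∈ Agt := hAgt 1 h1 0 zero_le_one
  have hS5 := hasS5_gpermAx Agt
  have hpos0 : ProvC Agt (gpermAx Agt)
      (impF (posF 0 (posF 1 (posF 0 φ))) (posF 1 (posF 0 φ))) :=
    imp_trans (posF_posF_imp_posF_posF hAgt h0 h1 h1 h0 zero_ne_one (posF 0 φ))
      (posF_mono hS5 h1 (posF_posF_imp_posF hS5 h0 φ))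
  have hnec : ProvC Agt (gpermAx Agt)
      (impF (posF 1 (posF 0 φ)) (.cstit 1 (.cstit 0 (posF 1 (posF 0 φ))))) :=
    imp_trans (cstit_five hS5 h1 (posF 0 φ))
      (cstit_mono hS5 h1 (imp_cstit_of_posF_imp hS5 h0 hpos0))
  exact imp_trans (diaF_imp_posF_posF h1 φ) (imp_trans hnec
    (imp_trans (cstit_mono hS5 h1 (cstit_mono hS5 h0 (posF_posF_imp_diaF h1 φ)))
      (iff_mpr (gpermAx_box_iff _))))

theorem box_imp_cstit (hAgt : InitSeg Agt) (h1 : 1 ∈ Agt) (hi : i ∈ Agt) (φ : Fml) :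
    ProvC Agt (gpermAx Agt) (impF (.box φ) (.cstit i φ)) := by
  have h0 : 0 ∈ Agt := hAgt 1 h1 0 zero_le_one
  have hS5 := hasS5_gpermAx Agt
  have hdual : ProvC Agt (gpermAx Agt) (impF (posF i (.neg φ)) (posF 1 (posF 0 (.neg φ)))) :=
    imp_trans (imp_posF hS5 hi _) (posF_posF_imp_posF_posF hAgt hi hi h1 h0 zero_ne_one _)
  exact imp_trans (iff_mp (gpermAx_box_iff φ))
    (imp_trans (cstit_mono hS5 h1 (cstit_imp_not_posF_not hS5 h0 φ))
      (imp_trans (imp_not_not _) (imp_trans (contra hdual) (not_posF_not_imp_cstit hS5 hi φ))))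

theorem aaia {k : ℕ} (hk1 : 1 ≤ k) (hk : ∀ i ≤ k, i ∈ Agt) (φ : Fml) :
    ProvC Agt (gpermAx Agt) (aaiaFml k φ) := by
  have hgperm := gpermAx_gpermFml hk (hk 1 hk1) (hk 0 k.zero_le) (hk k le_rfl) φ
  rw [gpermFml, range_succ_filter_ne] at hgperm
  exact imp_trans (diaF_imp_posF_posF (hk 1 hk1) φ) hgperm

theorem box_nec (h0 : 0 ∈ Agt) (h1 : 1 ∈ Agt) {φ : Fml} (h : ProvC Agt (gpermAx Agt) φ) :
    ProvC Agt (gpermAx Agt) (.box φ) :=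
  mp (iff_mpr (gpermAx_box_iff φ)) (nec h1 (nec h0 h))

end ProvC

/-- In the Hilbert system with all propositional tautologies,
the S5 schemas `S5(i)` for each `[i]`, `Def(□) : □φ ↔ [1][0]φ`, and the
general permutation schemas `(GPerm_k)`, with rules modus ponens and
`[i]`-necessitation: (1) every instance of the S5 axiom schemas for `□`
(K, T and 5) is provable; (2) every instance of `(Incl_i) : □φ → [i]φ` is
provable; (3) every instance of `(AAIA_k) : ◇φ → ⟨k⟩⋀_{0 ≤ i < k}⟨i⟩φ` is
provable; and (4) the rule of `□`-necessitation is derivable. -/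
theorem gperm_system_derivations (Agt : Set ℕ) (hAgt : InitSeg Agt)
    (h1 : 1 ∈ Agt) :
    ((∀ φ ψ : Fml, NoDstit φ → AgentsIn Agt φ → NoDstit ψ → AgentsIn Agt ψ →
        ProvC Agt (gpermAx Agt)
          (impF (.box (impF φ ψ)) (impF (.box φ) (.box ψ)))) ∧
     (∀ φ : Fml, NoDstit φ → AgentsIn Agt φ →
        ProvC Agt (gpermAx Agt) (impF (.box φ) φ)) ∧
     (∀ φ : Fml, NoDstit φ → AgentsIn Agt φ →
        ProvC Agt (gpermAx Agt) (impF (diaF φ) (.box (diaF φ)))))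
    ∧
    (∀ i ∈ Agt, ∀ φ : Fml, NoDstit φ → AgentsIn Agt φ →
        ProvC Agt (gpermAx Agt) (impF (.box φ) (.cstit i φ)))
    ∧
    (∀ k : ℕ, 1 ≤ k → (∀ i ≤ k, i ∈ Agt) →
      ∀ φ : Fml, NoDstit φ → AgentsIn Agt φ →
        ProvC Agt (gpermAx Agt) (aaiaFml k φ))
    ∧
    (∀ φ : Fml, ProvC Agt (gpermAx Agt) φ →
        ProvC Agt (gpermAx Agt) (.box φ)) := by
  have h0 : 0 ∈ Agt := hAgt 1 h1 0 zero_le_one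
  exact ⟨⟨fun φ ψ _ _ _ _ => ProvC.box_K h0 h1 φ ψ, fun φ _ _ => ProvC.box_T h0 h1 φ,
      fun φ _ _ => ProvC.box_five hAgt h1 φ⟩,
    fun i hi φ _ _ => ProvC.box_imp_cstit hAgt h1 hi φ,
    fun k hk1 hk φ _ _ => ProvC.aaia hk1 hk φ,
    fun φ => ProvC.box_nec h0 h1⟩

end STIT
end

section
/- Every instance of the Church–Rosser schema ⟨0⟩[1]φ → [1]⟨0⟩φ is provable from the axiom schemas S5(0), S5(1) and (GPerm_1): ⟨l⟩⟨m⟩φ → ⟨n⟩⋀_{i ≤ 1, i ≠ n}⟨i⟩φ, by the rules of modus ponens and [i]-necessitation. -/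
/-! Common infrastructure for STIT logic (Chellas STIT, deliberative STIT,
historic necessity), following Balbiani, Herzig & Troquard,
"Alternative axiomatics and complexity of deliberative STIT theories". -/

namespace STIT

/-! GPerm₁ with `l = 1`, `m = n = 0` commutes the diamonds: `⟨1⟩⟨0⟩ψ → ⟨0⟩⟨1⟩ψ`.
Taking `ψ = [1]φ` and using `⟨1⟩[1]φ → φ` (the dual of the S5 theorem B)
gives `⟨1⟩⟨0⟩[1]φ → ⟨0⟩φ`; since `⟨1⟩ ⊣ [1]` in S5, this is equivalent to
`⟨0⟩[1]φ → [1]⟨0⟩φ`. -/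

section Propositional

variable {Agt : Set ℕ} {Ax : Set Fml} {a b c : Fml}

theorem ProvC.mp_of_taut
    (hab : ∀ v : Fml → Prop, (∀ ψ, v (.neg ψ) ↔ ¬ v ψ) →
      (∀ ψ χ, v (.and ψ χ) ↔ v ψ ∧ v χ) → v a → v b)
    (ha : ProvC Agt Ax a) : ProvC Agt Ax b :=
  .mp (.taut fun v hn hc => by
    simp only [impF, hn, hc]
    exact fun h => h.2 (hab v hn hc h.1)) ha

theorem ProvC.imp_trans_s9 (h₁ : ProvC Agt Ax (impF a b)) (h₂ : ProvC Agt Ax (impF b c)) :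
    ProvC Agt Ax (impF a c) :=
  .mp (h₁.mp_of_taut fun v hn hc => by simp only [impF, hn, hc]; tauto) h₂

theorem ProvC.contrapose (h : ProvC Agt Ax (impF a b)) :
    ProvC Agt Ax (impF (.neg b) (.neg a)) :=
  h.mp_of_taut fun v hn hc => by simp only [impF, hn, hc]; tauto

end Propositional

section S5

variable {Agt : Set ℕ} {Ax : Set Fml} {i : ℕ} {a b : Fml}

theorem ProvC.cstit_mono_s9 (hi : i ∈ Agt) (hS5 : s5Set (Fml.cstit i) ⊆ Ax)
    (h : ProvC Agt Ax (impF a b)) : ProvC Agt Ax (impF (.cstit i a) (.cstit i b)) :=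
  .mp (.axm (hS5 (Or.inl ⟨a, b, rfl⟩))) (.nec hi h)

theorem ProvC.posF_mono_s9 (hi : i ∈ Agt) (hS5 : s5Set (Fml.cstit i) ⊆ Ax)
    (h : ProvC Agt Ax (impF a b)) : ProvC Agt Ax (impF (posF i a) (posF i b)) :=
  (cstit_mono_s9 hi hS5 h.contrapose).contrapose

theorem ProvC.imp_cstit_posF (hS5 : s5Set (Fml.cstit i) ⊆ Ax) (a : Fml) :
    ProvC Agt Ax (impF a (.cstit i (posF i a))) := by
  have hT : ProvC Agt Ax (impF a (posF i a)) :=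
    (ProvC.axm (hS5 (Or.inr (Or.inl ⟨.neg a, rfl⟩)))).mp_of_taut fun v hn hc => by
      simp only [impF, posF, hn, hc]; tauto
  exact hT.imp_trans_s9 (.axm (hS5 (Or.inr (Or.inr ⟨a, rfl⟩))))

theorem ProvC.imp_cstit_of_posF_imp_s9 (hi : i ∈ Agt) (hS5 : s5Set (Fml.cstit i) ⊆ Ax)
    (h : ProvC Agt Ax (impF (posF i a) b)) : ProvC Agt Ax (impF a (.cstit i b)) :=
  (imp_cstit_posF hS5 a).imp_trans_s9 (cstit_mono_s9 hi hS5 h)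

theorem ProvC.posF_cstit_imp (hi : i ∈ Agt) (hS5 : s5Set (Fml.cstit i) ⊆ Ax) (a : Fml) :
    ProvC Agt Ax (impF (posF i (.cstit i a)) a) := by
  have hB : ProvC Agt Ax (impF (.neg a) (.cstit i (.neg (.cstit i a)))) :=
    (imp_cstit_posF hS5 (.neg a)).imp_trans_s9 <| cstit_mono_s9 hi hS5 <| ProvC.contrapose <|
      cstit_mono_s9 hi hS5 <| .taut fun v hn hc => by simp only [impF, hn, hc]; tauto
  exact hB.mp_of_taut fun v hn hc => by simp only [impF, posF, hn, hc]; tauto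

theorem ProvC.posF_cstit_imp_cstit_posF {j : ℕ} (hi : i ∈ Agt) (hj : j ∈ Agt)
    (hS5i : s5Set (Fml.cstit i) ⊆ Ax) (hS5j : s5Set (Fml.cstit j) ⊆ Ax)
    (hcomm : ∀ ψ, ProvC Agt Ax (impF (posF j (posF i ψ)) (posF i (posF j ψ)))) (φ : Fml) :
    ProvC Agt Ax (impF (posF i (.cstit j φ)) (.cstit j (posF i φ))) :=
  imp_cstit_of_posF_imp_s9 hj hS5j <|
    (hcomm _).imp_trans_s9 (posF_mono_s9 hi hS5i (posF_cstit_imp hj hS5j φ))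

end S5

theorem gpermFml_one_zero (l m : ℕ) (ψ : Fml) :
    gpermFml 1 l m 0 ψ = impF (posF l (posF m ψ)) (posF 0 (posF 1 ψ)) :=
  rfl

theorem church_rosser_provable_general (φ : Fml) :
    ProvC {0, 1}
      (s5Set (fun ψ => Fml.cstit 0 ψ) ∪ s5Set (fun ψ => Fml.cstit 1 ψ) ∪
        {χ | ∃ l ∈ ({0, 1} : Set ℕ), ∃ m ∈ ({0, 1} : Set ℕ),
             ∃ n ∈ ({0, 1} : Set ℕ), ∃ ψ : Fml, χ = gpermFml 1 l m n ψ})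
      (impF (posF 0 (.cstit 1 φ)) (.cstit 1 (posF 0 φ))) := by
  exact ProvC.posF_cstit_imp_cstit_posF (by simp) (by simp)
    (fun _ h => .inl (.inl h)) (fun _ h => .inl (.inr h))
    (fun ψ => .axm (.inr ⟨1, by simp, 0, by simp, 0, by simp, ψ, gpermFml_one_zero 1 0 ψ⟩)) φ

/-- Every instance of the Church–Rosser schema
`⟨0⟩[1]φ → [1]⟨0⟩φ` is provable from the axiom schemas `S5(0)`, `S5(1)` and
`(GPerm_1) : ⟨l⟩⟨m⟩φ → ⟨n⟩⋀_{i ≤ 1, i ≠ n}⟨i⟩φ`, by the rules of modus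
ponens and `[i]`-necessitation. -/
theorem church_rosser_provable (φ : Fml) (hφb : NoBox φ) (hφd : NoDstit φ)
    (hφA : AgentsIn {0, 1} φ) :
    ProvC {0, 1}
      (s5Set (fun ψ => Fml.cstit 0 ψ) ∪ s5Set (fun ψ => Fml.cstit 1 ψ) ∪
        {χ | ∃ l ∈ ({0, 1} : Set ℕ), ∃ m ∈ ({0, 1} : Set ℕ),
             ∃ n ∈ ({0, 1} : Set ℕ), ∃ ψ : Fml, χ = gpermFml 1 l m n ψ})
      (impF (posF 0 (.cstit 1 φ)) (.cstit 1 (posF 0 φ))) :=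
  church_rosser_provable_general φ

end STIT
end

section
/- Let M = ⟨W,R,V⟩ be a Kripke model in which each R_i (i ∈ Agt) is an equivalence relation on W and R satisfies the general permutation property. Then for all agents i, j ∈ Agt with i ≠ j, R_i ∘ R_j = R_1 ∘ R_0. -/
/-! Common infrastructure for STIT logic (Chellas STIT, deliberative STIT,
historic necessity), following Balbiani, Herzig & Troquard,
"Alternative axiomatics and complexity of deliberative STIT theories". -/

namespace STIT

theorem InitSeg.zero_mem {A : Set ℕ} (hA : InitSeg A) {i : ℕ} (hi : i ∈ A) : 0 ∈ A :=
  hA i hi 0 (Nat.zero_le i)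

theorem GenPerm.comp_le_comp {Agt : Set ℕ} {M : KModel Agt} (hgp : GenPerm M)
    {a b c d : ℕ} (ha : a ∈ Agt) (hb : b ∈ Agt) (hc : c ∈ Agt) (hd : d ∈ Agt) (hcd : c ≠ d) :
    Relation.Comp (M.R a) (M.R b) ≤ Relation.Comp (M.R c) (M.R d) := by
  intro w v hwv
  obtain ⟨u, hwu, hu⟩ := hgp w v a ha b hb c hc hwv
  exact ⟨u, hwu, hu d hd hcd.symm⟩

/-- Let `M = ⟨W,R,V⟩` be a Kripke model in which each `R i`
(`i ∈ Agt`) is an equivalence relation and `R` satisfies the general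
permutation property. Then for all agents `i, j ∈ Agt` with `i ≠ j`,
`R_i ∘ R_j = R_1 ∘ R_0`. -/
theorem comp_eq_comp_one_zero (Agt : Set ℕ) (hAgt : InitSeg Agt)
    (h1 : 1 ∈ Agt) (M : KModel Agt) (hgp : GenPerm M)
    (i j : ℕ) (hi : i ∈ Agt) (hj : j ∈ Agt) (hij : i ≠ j) :
    Relation.Comp (M.R i) (M.R j) = Relation.Comp (M.R 1) (M.R 0) :=
  have h0 : 0 ∈ Agt := hAgt.zero_mem h1
  le_antisymm (hgp.comp_le_comp hi hj h1 h0 one_ne_zero) (hgp.comp_le_comp h1 h0 hi hj hij)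

end STIT
end

section
/- Let M = ⟨W,R,V⟩ be a Kripke model in which each R_i (i ∈ Agt) is an equivalence relation on W and R satisfies the general permutation property. Then for all agents i, j ∈ Agt, the composed relation R_i ∘ R_j is an equivalence relation on W. -/
/-! Common infrastructure for STIT logic (Chellas STIT, deliberative STIT,
historic necessity), following Balbiani, Herzig & Troquard,
"Alternative axiomatics and complexity of deliberative STIT theories". -/

namespace STIT

theorem _root_.Equivalence.comp_of_comp_le_comp {α : Type*} {r s : α → α → Prop}
    (hr : Equivalence r) (hs : Equivalence s) (hsr : Relation.Comp s r ≤ Relation.Comp r s) :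
    Equivalence (Relation.Comp r s) where
  refl a := ⟨a, hr.refl a, hs.refl a⟩
  symm := by
    rintro a b ⟨c, hac, hcb⟩
    exact hsr b a ⟨c, hs.symm hcb, hr.symm hac⟩
  trans := by
    rintro a b c ⟨x, hax, hxb⟩ ⟨y, hby, hyc⟩
    obtain ⟨z, hxz, hzy⟩ := hsr x y ⟨b, hxb, hby⟩
    exact ⟨z, hr.trans hax hxz, hs.trans hzy hyc⟩

theorem GenPerm.comp_le_comp_s11 {Agt : Set ℕ} {M : KModel Agt} (hgp : GenPerm M) {i j : ℕ}
    (hi : i ∈ Agt) (hj : j ∈ Agt) :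
    Relation.Comp (M.R j) (M.R i) ≤ Relation.Comp (M.R i) (M.R j) := by
  obtain rfl | hij := eq_or_ne i j
  · exact le_rfl
  · intro w v hwv
    obtain ⟨u, hwu, huv⟩ := hgp w v j hj i hi i hi hwv
    exact ⟨u, hwu, huv j hj hij.symm⟩

theorem comp_equivalence_general (Agt : Set ℕ) (M : KModel Agt) (hgp : GenPerm M)
    (i j : ℕ) (hi : i ∈ Agt) (hj : j ∈ Agt) :
    Equivalence (Relation.Comp (M.R i) (M.R j)) :=
  (M.equiv i hi).comp_of_comp_le_comp (M.equiv j hj) (hgp.comp_le_comp_s11 hi hj)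

/-- Let `M = ⟨W,R,V⟩` be a Kripke model in which each `R i`
(`i ∈ Agt`) is an equivalence relation and `R` satisfies the general
permutation property. Then for all agents `i, j ∈ Agt`, the composed
relation `R_i ∘ R_j` is an equivalence relation on `W`. -/
theorem comp_equivalence (Agt : Set ℕ) (hAgt : InitSeg Agt)
    (h1 : 1 ∈ Agt) (M : KModel Agt) (hgp : GenPerm M)
    (i j : ℕ) (hi : i ∈ Agt) (hj : j ∈ Agt) :
    Equivalence (Relation.Comp (M.R i) (M.R j)) :=
  comp_equivalence_general Agt M hgp i j hi hj

end STIT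
end

section
/- Let M = ⟨W,R,V⟩ be a Kripke model in which each R_i (i ∈ Agt) is an equivalence relation on W and R satisfies the general permutation property. Then the reflexive–transitive closure of the union ⋃_{i∈Agt} R_i equals R_0 ∘ R_1, which in turn equals R_1 ∘ R_0. -/
/-! Taking `l = m = i` in the general permutation property puts every `R i` inside `R 0 ∘ R 1`,
and taking `m = n ≠ l` shows that `R 0` and `R 1` commute. Two commuting equivalence
relations compose to an equivalence relation, so `R 0 ∘ R 1` contains the reflexive–transitive
closure of `⋃ i, R i`; the reverse inclusion is a path of two steps. -/

namespace Relation

variable {α : Type*} {r s t : α → α → Prop}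

theorem equivalence_comp_of_comm (hr : Equivalence r) (hs : Equivalence s)
    (hrs : Comp r s = Comp s r) : Equivalence (Comp r s) where
  refl a := ⟨a, hr.refl a, hs.refl a⟩
  symm := by
    rintro a b ⟨x, hax, hxb⟩
    rw [hrs]
    exact ⟨x, hs.symm hxb, hr.symm hax⟩
  trans := by
    rintro a b c ⟨x, hax, hxb⟩ ⟨y, hby, hyc⟩
    obtain ⟨z, hxz, hzy⟩ : Comp r s x y := hrs ▸ ⟨b, hxb, hby⟩
    exact ⟨z, hr.trans hax hxz, hs.trans hzy hyc⟩

theorem comp_le_reflTransGen (hr : r ≤ t) (hs : s ≤ t) : Comp r s ≤ ReflTransGen t :=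
  fun a c ⟨b, hab, hbc⟩ => .tail (.single (hr a b hab)) (hs b c hbc)

end Relation

namespace STIT

namespace GenPerm

variable {Agt : Set ℕ} {M : KModel Agt} {i l m n : ℕ}

theorem comp_le_comp_swap (hgp : GenPerm M) (hl : l ∈ Agt) (hn : n ∈ Agt) (hln : l ≠ n) :
    Relation.Comp (M.R l) (M.R n) ≤ Relation.Comp (M.R n) (M.R l) := fun w v hwv =>
  let ⟨u, hwu, huv⟩ := hgp w v l hl n hn n hn hwv
  ⟨u, hwu, huv l hl hln⟩

theorem comp_comm (hgp : GenPerm M) (hl : l ∈ Agt) (hn : n ∈ Agt) (hln : l ≠ n) :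
    Relation.Comp (M.R l) (M.R n) = Relation.Comp (M.R n) (M.R l) :=
  le_antisymm (hgp.comp_le_comp_swap hl hn hln) (hgp.comp_le_comp_swap hn hl hln.symm)

theorem le_comp (hgp : GenPerm M) (hi : i ∈ Agt) (hm : m ∈ Agt) (hn : n ∈ Agt) (hmn : m ≠ n) :
    M.R i ≤ Relation.Comp (M.R n) (M.R m) := fun w v hwv =>
  let ⟨u, hwu, huv⟩ := hgp w v i hi i hi n hn ⟨v, hwv, (M.equiv i hi).refl v⟩
  ⟨u, hwu, huv m hm hmn⟩

end GenPerm

/-- Let `M = ⟨W,R,V⟩` be a Kripke model in which each `R i`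
(`i ∈ Agt`) is an equivalence relation and `R` satisfies the general
permutation property. Then the reflexive–transitive closure of
`⋃_{i ∈ Agt} R_i` equals `R_0 ∘ R_1`, which in turn equals `R_1 ∘ R_0`. -/
theorem rtc_union_eq_comp (Agt : Set ℕ) (hAgt : InitSeg Agt)
    (h1 : 1 ∈ Agt) (M : KModel Agt) (hgp : GenPerm M) :
    Relation.ReflTransGen (fun w v => ∃ i ∈ Agt, M.R i w v) =
      Relation.Comp (M.R 0) (M.R 1) ∧
    Relation.Comp (M.R 0) (M.R 1) = Relation.Comp (M.R 1) (M.R 0) := by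
  have h0 : 0 ∈ Agt := hAgt 1 h1 0 zero_le_one
  have hcomm := hgp.comp_comm h0 h1 zero_ne_one
  have hequiv := Relation.equivalence_comp_of_comm (M.equiv 0 h0) (M.equiv 1 h1) hcomm
  refine ⟨le_antisymm ?_ ?_, hcomm⟩
  · refine Relation.reflTransGen_le_of_equivalence_of_le hequiv ?_
    rintro w v ⟨i, hi, hwv⟩
    exact hgp.le_comp hi h1 h0 one_ne_zero w v hwv
  · exact Relation.comp_le_reflTransGen (fun w v h => ⟨0, h0, h⟩) (fun w v h => ⟨1, h1, h⟩)

end STIT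
end
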